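/- arXiv:1112.6063 — 2 statements merged into one kernel-verified Lean document; each statement's English description precedes it below -/
import Mathlib

section
/- Let n ≥ 1, x ∈ {0,1}^n, 1 ≤ t ≤ n, and 0 ≤ l < ⌈log₂(t+1)⌉. Let s ∈ {0,…,2^l − 1} be the residue of the Hamming weight |x| modulo 2^l. Then TH_n^t(x) = 1 ⊕ (⊕_{k} EX_n^k(x)), where the XOR ranges over all 0 ≤ k ≤ t−1 with k ≡ s (mod 2^l). Moreover, the number of such k is at most t/2^l + 1. -/
/-! The filter keeps the residue class of `w = |x|`, so at most the single term `k = w` survives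
in the XOR: it equals `[w < t]`, whose complement in `ZMod 2` is `TH_n^t(x)`. A residue class
modulo `m` meets `{0, …, t - 1}` in `t / m` or `t / m + 1` points. -/

open Finset

lemma card_filter_range_mod_eq_le (t w : ℕ) {m : ℕ} (hm : 0 < m) :
    #{k ∈ range t | k % m = w % m} ≤ t / m + 1 := by
  have hcount := Nat.count_modEq_card t hm w
  rw [Nat.count_eq_card_filter_range] at hcount
  change #{k ∈ range t | k % m = w % m} = _ at hcount
  split_ifs at hcount <;> omega

lemma ite_le_eq_one_add_ite_lt (t w : ℕ) :
    (if t ≤ w then (1 : ZMod 2) else 0) = 1 + if w < t then 1 else 0 := by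
  by_cases h : t ≤ w
  · simp [h, not_lt.mpr h]
  · rw [if_neg h, if_pos (not_le.mp h)]
    decide

theorem stmt_15_general (n t l : ℕ) (x : Fin n → Bool) :
    ((if t ≤ ∑ j, (x j).toNat then (1 : ZMod 2) else 0) =
        1 + ∑ k ∈ (Finset.range t).filter
              (fun k => k % 2 ^ l = (∑ j, (x j).toNat) % 2 ^ l),
            (if (∑ j, (x j).toNat) = k then (1 : ZMod 2) else 0)) ∧
      ((Finset.range t).filter
          (fun k => k % 2 ^ l = (∑ j, (x j).toNat) % 2 ^ l)).card ≤ t / 2 ^ l + 1 := by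
  set w := ∑ j, (x j).toNat
  refine ⟨?_, card_filter_range_mod_eq_le t w (by positivity)⟩
  rw [sum_ite_eq]
  simpa only [mem_filter, mem_range, and_true] using ite_le_eq_one_add_ite_lt t w

/-- For `1 ≤ t ≤ n`, `0 ≤ l < ⌈log₂(t+1)⌉` and `x ∈ {0,1}^n`, with `s` the
residue of `|x|` modulo `2^l`:
`TH_n^t(x) = 1 ⊕ (⊕_k EX_n^k(x))` where `k` ranges over `0 ≤ k ≤ t-1` with
`k ≡ s (mod 2^l)`; moreover the number of such `k` is at most `t/2^l + 1`.
XOR is addition in `ZMod 2`. -/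
theorem stmt_15 (n t l : ℕ) (hn : 1 ≤ n) (ht1 : 1 ≤ t) (htn : t ≤ n)
    (hl : l < Nat.clog 2 (t + 1)) (x : Fin n → Bool) :
    ((if t ≤ ∑ j, (x j).toNat then (1 : ZMod 2) else 0) =
        1 + ∑ k ∈ (Finset.range t).filter
              (fun k => k % 2 ^ l = (∑ j, (x j).toNat) % 2 ^ l),
            (if (∑ j, (x j).toNat) = k then (1 : ZMod 2) else 0)) ∧
      ((Finset.range t).filter
          (fun k => k % 2 ^ l = (∑ j, (x j).toNat) % 2 ^ l)).card ≤ t / 2 ^ l + 1 :=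
  stmt_15_general n t l x
end

section
/- For any n ≥ 1 and x = x_0⋯x_{n-1} ∈ {0,1}^n, e^{iπ·(1/2^{n-1})·Σ_{a ∈ {0,1}^n \ {0^n}} PA_n^a(x)} = (−1)^{OR_n(x)}, where PA_n^a(x) = ⊕_j a_j x_j ∈ {0,1} ⊂ ℝ and OR_n(x) ∈ {0,1} is the OR of the bits of x. -/
/-!
Flipping a coordinate `j₀` with `x j₀ = 1` is an involution of `{0,1}^n` that changes the parity of
`a · x`, so for `x ≠ 0` exactly half of all masks `a` have odd parity, and `a = 0` is not one of
them. The exponent is then `iπ`. For `x = 0` every parity vanishes and the exponent is `0`.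
-/

open Finset

theorem two_nsmul_sum_eq_card_nsmul_of_perm {α M : Type*} [Fintype α] [AddCommMonoid M]
    (σ : Equiv.Perm α) (f : α → M) (c : M) (h : ∀ a, f (σ a) + f a = c) :
    2 • ∑ a, f a = Fintype.card α • c := by
  calc 2 • ∑ a, f a = ∑ a, f (σ a) + ∑ a, f a := by rw [two_nsmul, Equiv.sum_comp]
    _ = ∑ _a : α, c := by rw [← sum_add_distrib]; exact sum_congr rfl fun a _ => h a
    _ = Fintype.card α • c := by rw [sum_const, card_univ]

section Parity

variable {ι : Type*} [DecidableEq ι]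

theorem update_not_involutive (j₀ : ι) :
    Function.Involutive fun a : ι → Bool => Function.update a j₀ (!a j₀) := by
  intro a
  ext j
  by_cases h : j = j₀
  · subst h; simp
  · simp [Function.update_of_ne h]

variable [Fintype ι]

theorem dot_mod_two_update_not_add {x : ι → Bool} {j₀ : ι} (hx : x j₀ = true) (a : ι → Bool) :
    (∑ j, (Function.update a j₀ (!a j₀) j).toNat * (x j).toNat) % 2
      + (∑ j, (a j).toNat * (x j).toNat) % 2 = 1 := by
  simp only [Function.apply_update (fun j (b : Bool) => b.toNat * (x j).toNat)]
  rw [← add_sum_erase _ _ (mem_univ j₀), ← add_sum_erase _ _ (mem_univ j₀),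
    Function.update_self, sum_congr rfl fun j hj =>
      Function.update_of_ne (ne_of_mem_erase hj) _ (fun k => (a k).toNat * (x k).toNat), hx]
  cases a j₀ <;> simp only [Bool.not_false, Bool.not_true, Bool.toNat_true, Bool.toNat_false] <;>
    omega

theorem sum_dot_mod_two_eq {x : ι → Bool} {j₀ : ι} (hx : x j₀ = true) :
    ∑ a : ι → Bool, (∑ j, (a j).toNat * (x j).toNat) % 2 = 2 ^ (Fintype.card ι - 1) := by
  have hcard : Fintype.card ι = Fintype.card ι - 1 + 1 :=
    (Nat.sub_add_cancel (Fintype.card_pos_iff.mpr ⟨j₀⟩)).symm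
  have := two_nsmul_sum_eq_card_nsmul_of_perm (update_not_involutive j₀).toPerm
    (fun a => (∑ j, (a j).toNat * (x j).toNat) % 2) 1
    (dot_mod_two_update_not_add hx)
  rw [smul_eq_mul, smul_eq_mul, mul_one, Fintype.card_fun, Fintype.card_bool, hcard,
    pow_succ] at this
  omega

end Parity

theorem stmt_18_general (n : ℕ) (x : Fin n → Bool) :
    Complex.exp (Real.pi * Complex.I *
        (((1 / 2 ^ (n - 1) : ℝ)) *
          ∑ a ∈ Finset.univ.filter (fun a : Fin n → Bool => a ≠ (fun _ => false)),
            (((∑ j, (a j).toNat * (x j).toNat) % 2 : ℕ) : ℝ)))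
      = (-1) ^ (if ∃ j, x j = true then 1 else 0 : ℕ) := by
  by_cases hx : ∃ j, x j = true
  · obtain ⟨j₀, hj₀⟩ := hx
    have hsum : ∑ a ∈ univ.filter (fun a : Fin n → Bool => a ≠ (fun _ => false)),
        (((∑ j, (a j).toNat * (x j).toNat) % 2 : ℕ) : ℝ) = 2 ^ (n - 1) := by
      rw [sum_filter_of_ne (by rintro a - ha rfl; simp at ha), ← Nat.cast_sum,
        sum_dot_mod_two_eq hj₀, Fintype.card_fin, Nat.cast_pow, Nat.cast_ofNat]
    rw [hsum, ← Complex.ofReal_mul, one_div_mul_cancel (by positivity), Complex.ofReal_one, mul_one,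
      Complex.exp_pi_mul_I, if_pos ⟨j₀, hj₀⟩, pow_one]
  · push Not at hx
    simp [hx]

/-- For `x ∈ {0,1}^n`,
`e^{iπ (1/2^{n-1}) Σ_{a ≠ 0^n} PA_n^a(x)} = (−1)^{OR_n(x)}`. -/
theorem stmt_18 (n : ℕ) (hn : 1 ≤ n) (x : Fin n → Bool) :
    Complex.exp (Real.pi * Complex.I *
        (((1 / 2 ^ (n - 1) : ℝ)) *
          ∑ a ∈ Finset.univ.filter (fun a : Fin n → Bool => a ≠ (fun _ => false)),
            (((∑ j, (a j).toNat * (x j).toNat) % 2 : ℕ) : ℝ)))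
      = (-1) ^ (if ∃ j, x j = true then 1 else 0 : ℕ) :=
  stmt_18_general n x
end
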